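/- arXiv:2506.05502 — 4 statements merged into one kernel-verified Lean document; each statement's English description precedes it below -/
import Mathlib

section
/- Let (Ω, 𝒫) be a probability space, Θ a measurable space, and ℳ a finite nonempty set. Let K ≥ 1 and let L¹, …, L^K be positive integers. Let {θᵏᵢ : 1 ≤ k ≤ K, 1 ≤ i ≤ Lᵏ} be Θ-valued random variables and M¹, …, M^K be ℳ-valued random variables such that the θᵏᵢ are mutually independent and the whole family (θᵏᵢ) is independent of (M¹, …, M^K). Suppose that for each pair (k,i) there is a measurable function gᵏᵢ : Θ × ℳ → [0,1] and a constant pᵏᵢ ∈ [0,1] such that the per-token unbiasedness condition E[gᵏᵢ(θᵏᵢ, m)] = pᵏᵢ holds for every fixed m ∈ ℳ. Then E[ ∏_{k=1}^{K} ∏_{i=1}^{Lᵏ} gᵏᵢ(θᵏᵢ, Mᵏ) ] = ∏_{k=1}^{K} ∏_{i=1}^{Lᵏ} pᵏᵢ. -/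
open MeasureTheory ProbabilityTheory

/-- Auxiliary: integral of a finite product of mutually independent bounded
measurable real random variables equals the product of integrals. -/
lemma integral_finset_prod_of_iIndepFun {Ω ι : Type*} [MeasurableSpace Ω]
    {μ : Measure Ω} [IsProbabilityMeasure μ] (f : ι → Ω → ℝ)
    (hmeas : ∀ i, Measurable (f i))
    (hindep : iIndepFun f μ)
    (s : Finset ι) :
    ∫ ω, ∏ i ∈ s, f i ω ∂μ = ∏ i ∈ s, ∫ ω, f i ω ∂μ := by
  classical
  induction s using Finset.cons_induction with
  | empty => simp
  | cons a s ha ih =>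
    have hiv : IndepFun (∏ j ∈ s, f j) (f a) μ :=
      hindep.indepFun_finsetProd_of_notMem hmeas ha
    have h1 : (fun ω => ∏ i ∈ Finset.cons a s ha, f i ω)
        = (∏ j ∈ s, f j) * (f a) := by
      funext ω
      rw [Finset.prod_cons]
      simp [Finset.prod_apply, mul_comm]
    have hsm : AEStronglyMeasurable (∏ j ∈ s, f j) μ := by
      have h2 : (∏ j ∈ s, f j) = fun ω => ∏ j ∈ s, f j ω :=
        funext fun ω => Finset.prod_apply ω s f
      rw [h2]
      exact (Finset.measurable_prod _ fun j _ => hmeas j).aestronglyMeasurable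
    have := hiv.integral_mul_eq_mul_integral hsm (hmeas a).aestronglyMeasurable
    rw [h1, this, Finset.prod_cons]
    have hp : ∫ ω, (∏ j ∈ s, f j) ω ∂μ = ∏ i ∈ s, ∫ ω, f i ω ∂μ := by
      rw [show (fun ω => (∏ j ∈ s, f j) ω) = fun ω => ∏ j ∈ s, f j ω from by
        funext ω; simp]
      exact ih
    rw [hp]; ring

/-- K-shot stealthiness. If the watermark ciphers θᵏᵢ are mutually independent
and independent of the random messages Mᵏ, and each per-token watermarked probability
gᵏᵢ(·, m) is unbiased with mean pᵏᵢ for every fixed message m, then the expected joint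
watermarked probability equals the original joint probability ∏∏ pᵏᵢ. -/
theorem kshot_stealthy
    {Ω : Type*} [MeasurableSpace Ω] (μ : Measure Ω) [IsProbabilityMeasure μ]
    {Θ : Type*} [MeasurableSpace Θ]
    {M' : Type*} [Fintype M'] [Nonempty M'] [MeasurableSpace M'] [MeasurableSingletonClass M']
    (K : ℕ) (hK : 1 ≤ K) (L : Fin K → ℕ) (hL : ∀ k, 1 ≤ L k)
    (θ : (k : Fin K) → Fin (L k) → Ω → Θ)
    (hθmeas : ∀ k i, Measurable (θ k i))
    (M : Fin K → Ω → M')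
    (hMmeas : ∀ k, Measurable (M k))
    (hindep : iIndepFun
      (fun s : Σ k : Fin K, Fin (L k) => θ s.1 s.2) μ)
    (hindepM : IndepFun (fun ω (s : Σ k : Fin K, Fin (L k)) => θ s.1 s.2 ω)
      (fun ω k => M k ω) μ)
    (g : (k : Fin K) → Fin (L k) → Θ → M' → ℝ)
    (hgmeas : ∀ k i, Measurable (fun q : Θ × M' => g k i q.1 q.2))
    (hg0 : ∀ k i t m, 0 ≤ g k i t m) (hg1 : ∀ k i t m, g k i t m ≤ 1)
    (p : (k : Fin K) → Fin (L k) → ℝ)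
    (hp0 : ∀ k i, 0 ≤ p k i) (hp1 : ∀ k i, p k i ≤ 1)
    (hunbiased : ∀ k i (m : M'), ∫ ω, g k i (θ k i ω) m ∂μ = p k i) :
    ∫ ω, ∏ k : Fin K, ∏ i : Fin (L k), g k i (θ k i ω) (M k ω) ∂μ
      = ∏ k : Fin K, ∏ i : Fin (L k), p k i := by
  classical
  set S := Σ k : Fin K, Fin (L k) with hS
  set XM : Ω → (Fin K → M') := fun ω k => M k ω with hXM
  have hXMmeas : Measurable XM := measurable_pi_lambda _ hMmeas
  -- measurability of g with one argument fixed
  have hgm : ∀ (k : Fin K) (i : Fin (L k)) (m : M'),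
      Measurable (fun t : Θ => g k i t m) := fun k i m =>
    (hgmeas k i).comp (measurable_id.prodMk measurable_const)
  -- the product as a function of the cipher vector, for a fixed message vector
  have hΨmeas : ∀ v : Fin K → M',
      Measurable (fun t : (s : S) → Θ => ∏ s : S, g s.1 s.2 (t s) (v s.1)) := by
    intro v
    exact Finset.measurable_prod _ fun s _ =>
      (hgm s.1 s.2 (v s.1)).comp (measurable_pi_apply s)
  -- singletons of the pi type are measurable
  have hsing : ∀ v : Fin K → M', MeasurableSet ({v} : Set (Fin K → M')) := by
    intro v
    have : ({v} : Set (Fin K → M')) = ⋂ k, (fun x : Fin K → M' => x k) ⁻¹' {v k} := by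
      ext x
      simp [Set.mem_iInter, funext_iff, eq_comm]
    rw [this]
    exact MeasurableSet.iInter fun k =>
      (measurable_pi_apply k) (measurableSet_singleton _)
  -- pointwise decomposition over message vectors
  have hpt : ∀ ω, (∏ k : Fin K, ∏ i : Fin (L k), g k i (θ k i ω) (M k ω))
      = ∑ v : Fin K → M', (if XM ω = v then (1 : ℝ) else 0)
          * ∏ s : S, g s.1 s.2 (θ s.1 s.2 ω) (v s.1) := by
    intro ω
    simp only [ite_mul, one_mul, zero_mul]
    rw [Finset.sum_ite_eq Finset.univ (XM ω)
      (fun v => ∏ s : S, g s.1 s.2 (θ s.1 s.2 ω) (v s.1))]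
    simp only [Finset.mem_univ, if_true]
    rw [← Finset.univ_sigma_univ, Finset.prod_sigma]
  -- the cipher vector
  set Xθ : Ω → ((s : S) → Θ) := fun ω s => θ s.1 s.2 ω with hXθ
  -- indicator function of a message vector
  set χ : (Fin K → M') → (Fin K → M') → ℝ :=
    fun v m => if m = v then (1 : ℝ) else 0 with hχ
  have hχmeas : ∀ v, Measurable (χ v) := by
    intro v
    exact Measurable.ite (hsing v) measurable_const measurable_const
  -- per-index composed random variables
  set F : (Fin K → M') → (s : S) → Ω → ℝ :=
    fun v s ω => g s.1 s.2 (θ s.1 s.2 ω) (v s.1) with hF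
  have hFmeas : ∀ v s, Measurable (F v s) := fun v s =>
    (hgm s.1 s.2 (v s.1)).comp (hθmeas s.1 s.2)
  have hFindep : ∀ v, iIndepFun
      (F v) μ := by
    intro v
    exact hindep.comp (fun s t => g s.1 s.2 t (v s.1)) (fun s => hgm s.1 s.2 (v s.1))
  -- integral of the product over the ciphers, for a fixed message vector
  have hΦint : ∀ v : Fin K → M',
      ∫ ω, ∏ s : S, F v s ω ∂μ = ∏ s : S, p s.1 s.2 := by
    intro v
    rw [integral_finset_prod_of_iIndepFun (F v) (hFmeas v) (hFindep v)]
    exact Finset.prod_congr rfl fun s _ => hunbiased s.1 s.2 (v s.1)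
  -- measurability of each summand
  have hterm_meas : ∀ v : Fin K → M',
      Measurable (fun ω => χ v (XM ω) * ∏ s : S, F v s ω) := by
    intro v
    exact ((hχmeas v).comp hXMmeas).mul
      (Finset.measurable_prod _ fun s _ => hFmeas v s)
  -- integrability of each summand
  have hterm_int : ∀ v : Fin K → M',
      Integrable (fun ω => χ v (XM ω) * ∏ s : S, F v s ω) μ := by
    intro v
    refine (integrable_const (1 : ℝ)).mono'
      (hterm_meas v).aestronglyMeasurable ?_
    filter_upwards with ω
    have h0 : 0 ≤ ∏ s : S, F v s ω :=
      Finset.prod_nonneg fun s _ => hg0 s.1 s.2 _ _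
    have h1 : (∏ s : S, F v s ω) ≤ 1 :=
      Finset.prod_le_one (fun s _ => hg0 s.1 s.2 _ _) (fun s _ => hg1 s.1 s.2 _ _)
    rw [Real.norm_eq_abs, abs_mul]
    simp only [hχ]
    by_cases h : XM ω = v
    · simp [h, abs_of_nonneg h0, h1]
    · simp [h]
  -- integral of each summand, via independence
  have hterm_val : ∀ v : Fin K → M',
      ∫ ω, χ v (XM ω) * ∏ s : S, F v s ω ∂μ
        = (∫ ω, χ v (XM ω) ∂μ) * ∏ s : S, p s.1 s.2 := by
    intro v
    have hΦm : Measurable (fun t : (s : S) → Θ => ∏ s : S, g s.1 s.2 (t s) (v s.1)) :=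
      hΨmeas v
    have hiv : IndepFun
        ((fun t : (s : S) → Θ => ∏ s : S, g s.1 s.2 (t s) (v s.1)) ∘ Xθ)
        ((χ v) ∘ XM) μ :=
      hindepM.comp hΦm (hχmeas v)
    have heq : (fun ω => χ v (XM ω) * ∏ s : S, F v s ω)
        = ((fun t : (s : S) → Θ => ∏ s : S, g s.1 s.2 (t s) (v s.1)) ∘ Xθ)
          * ((χ v) ∘ XM) := by
      funext ω; simp [mul_comm, hF, hXθ, Function.comp]
    rw [heq, hiv.integral_mul_eq_mul_integral (hΦm.comp
        (measurable_pi_lambda _ fun s => hθmeas s.1 s.2)).aestronglyMeasurable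
      ((hχmeas v).comp hXMmeas).aestronglyMeasurable]
    have : ∫ ω, ((fun t : (s : S) → Θ => ∏ s : S, g s.1 s.2 (t s) (v s.1)) ∘ Xθ) ω ∂μ
        = ∏ s : S, p s.1 s.2 := by
      rw [← hΦint v]; rfl
    rw [this]; exact mul_comm _ _
  -- the indicators are integrable and sum to one
  have hχint : ∀ v : Fin K → M', Integrable (fun ω => χ v (XM ω)) μ := by
    intro v
    refine (integrable_const (1 : ℝ)).mono'
      (((hχmeas v).comp hXMmeas)).aestronglyMeasurable ?_
    filter_upwards with ω
    simp only [hχ]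
    by_cases h : XM ω = v <;> simp [h]
  have hsumχ : ∑ v : Fin K → M', ∫ ω, χ v (XM ω) ∂μ = 1 := by
    rw [← integral_finset_sum _ fun v _ => hχint v]
    have : (fun ω => ∑ v : Fin K → M', χ v (XM ω)) = fun _ => (1 : ℝ) := by
      funext ω
      simp only [hχ]
      rw [Finset.sum_ite_eq Finset.univ (XM ω) (fun _ => (1 : ℝ))]
      simp
    rw [this]
    simp
  -- put everything together
  have hmain : (fun ω => ∏ k : Fin K, ∏ i : Fin (L k), g k i (θ k i ω) (M k ω))
      = fun ω => ∑ v : Fin K → M', χ v (XM ω) * ∏ s : S, F v s ω := by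
    funext ω; exact hpt ω
  rw [hmain, integral_finset_sum _ fun v _ => hterm_int v]
  have : ∑ v : Fin K → M', ∫ ω, χ v (XM ω) * ∏ s : S, F v s ω ∂μ
      = ∑ v : Fin K → M', (∫ ω, χ v (XM ω) ∂μ) * ∏ s : S, p s.1 s.2 :=
    Finset.sum_congr rfl fun v _ => hterm_val v
  rw [this, ← Finset.sum_mul, hsumχ, one_mul, ← Finset.univ_sigma_univ,
    Finset.prod_sigma]
end

section
/- Let α, β be real numbers with 0 ≤ α ≤ β ≤ 1. (i) If α + β ≤ 1, then the function F≤_{α,β}(x) = max(x−β,0) + max(x−(1−β),0) + min(x−α,0) − max(x−(1−α),0) is monotone nondecreasing on [0,1] and satisfies F≤_{α,β}(1) − F≤_{α,β}(0) = 1. (ii) If α + β ≥ 1, then the function F≥_{α,β}(x) = max(x−β,0) + max((1−β)−x,0) + min(x−α,0) + min(x−(1−α),0) is monotone nondecreasing on [0,1] and satisfies F≥_{α,β}(1) − F≥_{α,β}(0) = 1. Consequently, in each case the increments of F over a partition of [0,1] into consecutive intervals form a probability distribution (nonnegative numbers summing to 1). -/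
open Finset

/-- Case-1/3 cumulative reweighting function of StealthInk. -/
noncomputable def Fle (α β x : ℝ) : ℝ :=
  max (x - β) 0 + max (x - (1 - β)) 0 + min (x - α) 0 - max (x - (1 - α)) 0

/-- Case-2/4 cumulative reweighting function of StealthInk. -/
noncomputable def Fge (α β x : ℝ) : ℝ :=
  max (x - β) 0 + max ((1 - β) - x) 0 + min (x - α) 0 + min (x - (1 - α)) 0

lemma fin_telescope (n : ℕ) (g : Fin (n + 1) → ℝ) :
    ∑ j : Fin n, (g j.succ - g j.castSucc) = g (Fin.last n) - g 0 := by
  induction n with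
  | zero => simp
  | succ n ih =>
    rw [Fin.sum_univ_castSucc]
    have h := ih (fun j => g j.castSucc)
    simp only [← Fin.succ_castSucc] at h
    rw [h]
    simp [Fin.succ_last]

lemma Fle_mono (α β : ℝ) (h0 : 0 ≤ α) (hαβ : α ≤ β) (hβ1 : β ≤ 1) (hs : α + β ≤ 1) :
    Monotone (Fle α β) := by
  intro a b hab
  simp only [Fle, max_def, min_def]
  split_ifs <;> linarith

lemma Fge_mono (α β : ℝ) (h0 : 0 ≤ α) (hαβ : α ≤ β) (hβ1 : β ≤ 1) (hs : 1 ≤ α + β) :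
    Monotone (Fge α β) := by
  intro a b hab
  simp only [Fge, max_def, min_def]
  split_ifs <;> linarith

/-- each branch of the StealthInk cumulative reweighting rule is monotone
nondecreasing on [0,1] with total increment 1; consequently its increments over a
partition of [0,1] into consecutive intervals form a probability distribution. -/
theorem stealthink_cdf_valid
    (α β : ℝ) (h0 : 0 ≤ α) (hαβ : α ≤ β) (hβ1 : β ≤ 1) :
    (α + β ≤ 1 →
      MonotoneOn (Fle α β) (Set.Icc 0 1) ∧
      Fle α β 1 - Fle α β 0 = 1 ∧
      (∀ (n : ℕ) (x : Fin (n + 1) → ℝ), Monotone x → x 0 = 0 → x (Fin.last n) = 1 →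
        (∀ j : Fin n, 0 ≤ Fle α β (x j.succ) - Fle α β (x j.castSucc)) ∧
        ∑ j : Fin n, (Fle α β (x j.succ) - Fle α β (x j.castSucc)) = 1)) ∧
    (1 ≤ α + β →
      MonotoneOn (Fge α β) (Set.Icc 0 1) ∧
      Fge α β 1 - Fge α β 0 = 1 ∧
      (∀ (n : ℕ) (x : Fin (n + 1) → ℝ), Monotone x → x 0 = 0 → x (Fin.last n) = 1 →
        (∀ j : Fin n, 0 ≤ Fge α β (x j.succ) - Fge α β (x j.castSucc)) ∧
        ∑ j : Fin n, (Fge α β (x j.succ) - Fge α β (x j.castSucc)) = 1)) := by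
  constructor
  · intro hs
    have hmono := Fle_mono α β h0 hαβ hβ1 hs
    have hval : Fle α β 1 - Fle α β 0 = 1 := by
      have h1 : Fle α β 1 = 1 - α := by
        unfold Fle
        rw [max_eq_left (by linarith : (0:ℝ) ≤ 1 - β),
          show (1:ℝ) - (1 - β) = β by ring, max_eq_left (by linarith : (0:ℝ) ≤ β),
          min_eq_right (by linarith : (0:ℝ) ≤ 1 - α),
          show (1:ℝ) - (1 - α) = α by ring, max_eq_left h0]
        ring
      have h2 : Fle α β 0 = -α := by
        unfold Fle
        rw [max_eq_right (by linarith : (0:ℝ) - β ≤ 0),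
          max_eq_right (by linarith : (0:ℝ) - (1 - β) ≤ 0),
          min_eq_left (by linarith : (0:ℝ) - α ≤ 0),
          max_eq_right (by linarith : (0:ℝ) - (1 - α) ≤ 0)]
        ring
      rw [h1, h2]; ring
    refine ⟨hmono.monotoneOn _, hval, fun n x hx hx0 hx1 => ⟨fun j => ?_, ?_⟩⟩
    · have := hmono (hx (Fin.castSucc_le_succ j))
      linarith
    · rw [fin_telescope n (fun j => Fle α β (x j)), hx0, hx1, hval]
  · intro hs
    have hmono := Fge_mono α β h0 hαβ hβ1 hs
    have hval : Fge α β 1 - Fge α β 0 = 1 := by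
      have h1 : Fge α β 1 = 1 - β := by
        unfold Fge
        rw [max_eq_left (by linarith : (0:ℝ) ≤ 1 - β),
          max_eq_right (by linarith : (1:ℝ) - β - 1 ≤ 0),
          min_eq_right (by linarith : (0:ℝ) ≤ 1 - α),
          min_eq_right (by linarith : (0:ℝ) ≤ 1 - (1 - α))]
        ring
      have h2 : Fge α β 0 = -β := by
        unfold Fge
        rw [max_eq_right (by linarith : (0:ℝ) - β ≤ 0),
          max_eq_left (by linarith : (0:ℝ) ≤ 1 - β - 0),
          min_eq_left (by linarith : (0:ℝ) - α ≤ 0),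
          min_eq_left (by linarith : (0:ℝ) - (1 - α) ≤ 0)]
        ring
      rw [h1, h2]; ring
    refine ⟨hmono.monotoneOn _, hval, fun n x hx hx0 hx1 => ⟨fun j => ?_, ?_⟩⟩
    · have := hmono (hx (Fin.castSucc_le_succ j))
      linarith
    · rw [fin_telescope n (fun j => Fge α β (x j)), hx0, hx1, hval]
end

section
/- Let α, β, a, b be real numbers with 0 ≤ α ≤ a ≤ b ≤ β ≤ 1. (i) If β ≤ 1/2 (Case 1), then F≤_{α,β}(b) − F≤_{α,β}(a) = 0, where F≤_{α,β}(x) = max(x−β,0) + max(x−(1−β),0) + min(x−α,0) − max(x−(1−α),0). (ii) If α ≥ 1/2 (Case 2), then F≥_{α,β}(b) − F≥_{α,β}(a) = 0, where F≥_{α,β}(x) = max(x−β,0) + max((1−β)−x,0) + min(x−α,0) + min(x−(1−α),0). That is, in the non-overlapping Cases 1 and 2 of the StealthInk reweighting rule, every token whose cumulative-probability interval [a,b] lies inside the red-list interval [α, β] receives reweighted probability 0. -/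
lemma Fle_zero (α β x : ℝ) (h0 : 0 ≤ α) (hαx : α ≤ x) (hxβ : x ≤ β) (hβ : β ≤ 1/2) :
    Fle α β x = 0 := by
  unfold Fle
  rw [max_eq_right (by linarith), max_eq_right (by linarith),
    min_eq_right (by linarith), max_eq_right (by linarith)]
  ring

lemma Fge_zero (α β x : ℝ) (hβ1 : β ≤ 1) (hαx : α ≤ x) (hxβ : x ≤ β) (hα : 1/2 ≤ α) :
    Fge α β x = 0 := by
  unfold Fge
  rw [max_eq_right (by linarith), max_eq_right (by linarith),
    min_eq_right (by linarith), min_eq_right (by linarith)]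
  ring

/-- in the non-overlapping Cases 1 (β ≤ 1/2) and 2 (α ≥ 1/2) of the StealthInk
reweighting rule, every token whose cumulative-probability interval [a,b] lies inside the
red-list interval [α,β] receives reweighted probability 0. -/
theorem stealthink_red_zero
    (α β a b : ℝ) (h0 : 0 ≤ α) (hαa : α ≤ a) (hab : a ≤ b) (hbβ : b ≤ β) (hβ1 : β ≤ 1) :
    (β ≤ 1 / 2 → Fle α β b - Fle α β a = 0) ∧
    (1 / 2 ≤ α → Fge α β b - Fge α β a = 0) := by
  constructor <;> intro h
  · rw [Fle_zero α β b h0 (by linarith) hbβ (by linarith),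
      Fle_zero α β a h0 hαa (by linarith) (by linarith)]
    ring
  · rw [Fge_zero α β b hβ1 (by linarith) hbβ (by linarith),
      Fge_zero α β a hβ1 hαa (by linarith) (by linarith)]
    ring
end

section
/- Let A ⊆ [0,1] be a Lebesgue-measurable set and let B = {1−t : t ∈ A}. Let p ∈ [0,1] and define g : [0, 1−p] → ℝ by g(x) = λ([x, x+p] ∩ B) − λ([x, x+p] ∩ A), where λ denotes Lebesgue measure. Then ∫_0^{1−p} g(x) dx = 0. Equivalently, if p < 1 and X is uniformly distributed on [0, 1−p], then E[g(X)] = 0. -/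
open MeasureTheory

lemma refl_inv : Function.LeftInverse (fun t : ℝ => 1 - t) (fun t : ℝ => 1 - t) := by
  intro x; simp

lemma refl_img_eq_preimg (S : Set ℝ) :
    (fun t : ℝ => 1 - t) '' S = (fun t : ℝ => 1 - t) ⁻¹' S :=
  congrFun (Set.image_eq_preimage_of_inverse refl_inv refl_inv) S

lemma vol_refl (S : Set ℝ) (hS : MeasurableSet S) :
    volume ((fun t : ℝ => 1 - t) '' S) = volume S := by
  rw [refl_img_eq_preimg]
  exact (Measure.measurePreserving_sub_left volume 1).measure_preimage hS.nullMeasurableSet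

/-- the net reweighting gain g(x) = λ([x,x+p] ∩ B) − λ([x,x+p] ∩ A), where B
is the mirror image of A about 1/2, integrates to 0 over [0, 1−p]; equivalently, if p < 1
and X is uniformly distributed on [0, 1−p] then E[g(X)] = 0. -/
theorem net_gain_integral_zero
    (A : Set ℝ) (hA : A ⊆ Set.Icc 0 1) (hAm : MeasurableSet A)
    (B : Set ℝ) (hB : B = (fun t : ℝ => 1 - t) '' A)
    (p : ℝ) (hp : p ∈ Set.Icc (0 : ℝ) 1)
    (g : ℝ → ℝ)
    (hg : ∀ x, g x = (volume (Set.Icc x (x + p) ∩ B)).toReal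
                   - (volume (Set.Icc x (x + p) ∩ A)).toReal) :
    (∫ x in (0 : ℝ)..(1 - p), g x) = 0 ∧
    (p < 1 →
      ∫ x, g x ∂((volume (Set.Icc (0 : ℝ) (1 - p)))⁻¹ •
        volume.restrict (Set.Icc (0 : ℝ) (1 - p))) = 0) := by
  have hBm : MeasurableSet B := by
    rw [hB, refl_img_eq_preimg]
    exact hAm.preimage (measurable_const.sub measurable_id)
  have hinj : Function.Injective (fun t : ℝ => 1 - t) := refl_inv.injective
  have hBA : (fun t : ℝ => 1 - t) '' B = A := by
    rw [hB, ← Set.image_comp]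
    have : ((fun t : ℝ => 1 - t) ∘ fun t : ℝ => 1 - t) = id := by
      funext x; simp
    rw [this, Set.image_id]
  have key : ∀ x : ℝ, g (1 - p - x) = - g x := by
    intro x
    have h1 : Set.Icc (1 - p - x) (1 - p - x + p)
        = (fun t : ℝ => 1 - t) '' Set.Icc x (x + p) := by
      rw [Set.image_const_sub_Icc]
      congr 1 <;> ring
    have hInterB : Set.Icc (1 - p - x) (1 - p - x + p) ∩ B
        = (fun t : ℝ => 1 - t) '' (Set.Icc x (x + p) ∩ A) := by
      rw [h1, hB, Set.image_inter hinj]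
    have hInterA : Set.Icc (1 - p - x) (1 - p - x + p) ∩ A
        = (fun t : ℝ => 1 - t) '' (Set.Icc x (x + p) ∩ B) := by
      rw [h1, ← hBA, Set.image_inter hinj]
    rw [hg, hg x, hInterB, hInterA,
      vol_refl _ (measurableSet_Icc.inter hAm),
      vol_refl _ (measurableSet_Icc.inter hBm)]
    ring
  have hint : (∫ x in (0 : ℝ)..(1 - p), g x) = 0 := by
    have h2 : (∫ x in (0 : ℝ)..(1 - p), g (1 - p - x))
        = ∫ x in (0 : ℝ)..(1 - p), g x := by
      have := intervalIntegral.integral_comp_sub_left (a := 0) (b := 1 - p) g (1 - p)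
      simpa using this
    have h3 : (∫ x in (0 : ℝ)..(1 - p), g (1 - p - x))
        = - ∫ x in (0 : ℝ)..(1 - p), g x := by
      simp_rw [key]
      exact intervalIntegral.integral_neg
    linarith [h2.symm.trans h3]
  refine ⟨hint, fun hp1 => ?_⟩
  rw [integral_smul_measure]
  have h4 : (∫ x in Set.Icc (0 : ℝ) (1 - p), g x) = 0 := by
    rw [integral_Icc_eq_integral_Ioc,
      ← intervalIntegral.integral_of_le (by linarith : (0:ℝ) ≤ 1 - p)]
    exact hint
  rw [h4]
  simp
end
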